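/- arXiv:1805.05278 — 4 statements merged into one kernel-verified Lean document; each statement's English description precedes it below -/
import Mathlib

section
/- Let V_L be m×n₁, T_L be n₁×n₁, V_R be (m−n₁)×n₂, T_R be n₂×n₂ complex matrices. Set W = [0; V_R] (the m×n₂ matrix obtained by stacking an n₁×n₂ zero block on top of V_R), V = [V_L W], and T = [[T_L, −T_L V_L^H W T_R],[0, T_R]]. Then I − V T V^H = (I − V_L T_L V_L^H) · diag(I_{n₁}, I_{m−n₁} − V_R T_R V_R^H). -/
/-! The block matrix `V T Vᴴ` expands to `VL TL VLᴴ + W TR Wᴴ - VL TL VLᴴ W TR Wᴴ`, so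
`1 - V T Vᴴ` factors as `(1 - VL TL VLᴴ) (1 - W TR Wᴴ)`; since `W` vanishes on its first `n₁` rows,
the second factor is `diag(1, 1 - VR TR VRᴴ)`. -/

open Matrix

namespace Matrix

variable {R : Type*} [Ring R] {m n₁ n₂ : Type*} [Fintype n₁] [Fintype n₂]

theorem one_sub_fromCols_mul_fromBlocks_mul_fromRows [Fintype m] [DecidableEq m]
    (A : Matrix m n₁ R) (B : Matrix m n₂ R) (P : Matrix n₁ m R) (Q : Matrix n₂ m R)
    (X : Matrix n₁ n₁ R) (Y : Matrix n₂ n₂ R) :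
    1 - fromCols A B * fromBlocks X (-(X * P * B * Y)) 0 Y * fromRows P Q =
      (1 - A * X * P) * (1 - B * Y * Q) := by
  rw [fromCols_mul_fromBlocks, fromCols_mul_fromRows]
  simp only [Matrix.mul_zero, add_zero, Matrix.mul_neg, Matrix.add_mul, Matrix.neg_mul,
    Matrix.mul_sub, Matrix.sub_mul, Matrix.mul_one, Matrix.one_mul, Matrix.mul_assoc]
  abel

theorem one_sub_fromRows_zero_mul_mul_fromCols_zero {m₁ m₂ : Type*} [DecidableEq m₁]
    [DecidableEq m₂] (B : Matrix m₂ n₂ R) (Y : Matrix n₂ n₂ R) (C : Matrix n₂ m₂ R) :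
    1 - fromRows (0 : Matrix m₁ n₂ R) B * Y * fromCols (0 : Matrix n₂ m₁ R) C =
      fromBlocks 1 0 0 (1 - B * Y * C) := by
  rw [fromRows_mul, fromRows_mul_fromCols, ← fromBlocks_one, sub_eq_add_neg, fromBlocks_neg,
    fromBlocks_add]
  simp [sub_eq_add_neg]

end Matrix

theorem stmt1 (n₁ n₂ m₂ : ℕ)
    (VL : Matrix (Fin n₁ ⊕ Fin m₂) (Fin n₁) ℂ) (TL : Matrix (Fin n₁) (Fin n₁) ℂ)
    (VR : Matrix (Fin m₂) (Fin n₂) ℂ) (TR : Matrix (Fin n₂) (Fin n₂) ℂ)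
    (W : Matrix (Fin n₁ ⊕ Fin m₂) (Fin n₂) ℂ)
    (hW : W = Matrix.of fun i j => Sum.casesOn i (fun _ => (0 : ℂ)) (fun i' => VR i' j))
    (V : Matrix (Fin n₁ ⊕ Fin m₂) (Fin n₁ ⊕ Fin n₂) ℂ)
    (hV : V = Matrix.fromCols VL W)
    (T : Matrix (Fin n₁ ⊕ Fin n₂) (Fin n₁ ⊕ Fin n₂) ℂ)
    (hT : T = Matrix.fromBlocks TL (-(TL * VLᴴ * W * TR)) 0 TR) :
    1 - V * T * Vᴴ =
      (1 - VL * TL * VLᴴ) * Matrix.fromBlocks 1 0 0 (1 - VR * TR * VRᴴ) := by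
  have hW_rows : W = fromRows 0 VR := by
    rw [hW]
    ext (i | i) j <;> rfl
  rw [hV, hT, conjTranspose_fromCols_eq_fromRows_conjTranspose,
    one_sub_fromCols_mul_fromBlocks_mul_fromRows, hW_rows,
    conjTranspose_fromRows_eq_fromCols_conjTranspose, conjTranspose_zero,
    one_sub_fromRows_zero_mul_mul_fromCols_zero]
end

section
/- Let A be an m×n complex matrix split as A = [[A₁₁, A₁₂],[A₂₁, A₂₂]] with A₁₁ of size n₁×n₁ (n₁ ≤ n, m ≥ n). Suppose (Q_L, R_L) is a QR decomposition of the left panel [A₁₁; A₂₁] (Q_L unitary m×m, R_L upper trapezoidal m×n₁), let [B₁₂; B₂₂] = Q_L^H [A₁₂; A₂₂] with B₁₂ of size n₁×(n−n₁), and suppose (Q_R, R_R) is a QR decomposition of B₂₂ (Q_R unitary (m−n₁)×(m−n₁), R_R upper trapezoidal). Then Q := Q_L · diag(I_{n₁}, Q_R) is unitary, R := [[R_L', B₁₂],[0, R_R]] (where R_L' denotes R_L) is upper trapezoidal, and A = Q R. -/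
/-!
`Q` is a product of the unitary `QL` and the unitary block diagonal `diag(1, QR)`. Upper
trapezoidality of `RL` forces its bottom `m₂` rows to vanish, so
`QLᴴ * A = [RL' B₁₂; 0 B₂₂]`, and writing `B₂₂ = QR * RR` pulls `diag(1, QR)` out on the left.
-/

open Matrix

namespace Matrix

variable {α : Type*} {m₁ m₂ n₁ n₂ : Type*}

theorem fromBlocks_zero_mem_unitary [Fintype m₁] [Fintype m₂] [DecidableEq m₁] [DecidableEq m₂]
    [CommSemiring α] [StarRing α] {U : Matrix m₁ m₁ α} {V : Matrix m₂ m₂ α}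
    (hU : U ∈ unitary (Matrix m₁ m₁ α)) (hV : V ∈ unitary (Matrix m₂ m₂ α)) :
    fromBlocks U 0 0 V ∈ unitary (Matrix (m₁ ⊕ m₂) (m₁ ⊕ m₂) α) := by
  rw [Unitary.mem_iff, star_eq_conjTranspose] at *
  simp [fromBlocks_conjTranspose, fromBlocks_multiply, hU, hV, fromBlocks_one]

theorem fromRows_toRows₁_zero_of_upperTrapezoidal [Zero α] {a b : ℕ}
    (R : Matrix (Fin a ⊕ Fin b) (Fin a) α)
    (hR : ∀ i (j : Fin a),
      (j : ℕ) < Sum.elim (fun k : Fin a => (k : ℕ)) (fun k : Fin b => a + k) i → R i j = 0) :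
    fromRows R.toRows₁ 0 = R := by
  ext (i | i) j
  · rfl
  · exact (hR (.inr i) j (by simp only [Sum.elim_inr]; omega)).symm

theorem fromBlocks_apply_eq_zero_of_upperTrapezoidal [Zero α] {a b c : ℕ}
    {R₁₁ : Matrix (Fin a) (Fin a) α} (R₁₂ : Matrix (Fin a) (Fin c) α)
    {R₂₂ : Matrix (Fin b) (Fin c) α}
    (h₁₁ : ∀ i j : Fin a, (j : ℕ) < (i : ℕ) → R₁₁ i j = 0)
    (h₂₂ : ∀ (i : Fin b) (j : Fin c), (j : ℕ) < (i : ℕ) → R₂₂ i j = 0) :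
    ∀ i j, Sum.elim (fun k : Fin a => (k : ℕ)) (fun k : Fin c => a + k) j <
        Sum.elim (fun k : Fin a => (k : ℕ)) (fun k : Fin b => a + k) i →
      fromBlocks R₁₁ R₁₂ 0 R₂₂ i j = 0 := by
  rintro (i | i) (j | j) h <;> simp only [Sum.elim_inl, Sum.elim_inr] at h
  · exact h₁₁ i j h
  · omega
  · rfl
  · exact h₂₂ i j (by omega)

theorem fromBlocks_eq_mul_of_panel_qr [Fintype m₁] [Fintype m₂] [DecidableEq m₁]
    [DecidableEq m₂] [Semiring α] [Star α]
    {A₁₁ : Matrix m₁ n₁ α} {A₁₂ : Matrix m₁ n₂ α} {A₂₁ : Matrix m₂ n₁ α} {A₂₂ : Matrix m₂ n₂ α}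
    {QL : Matrix (m₁ ⊕ m₂) (m₁ ⊕ m₂) α} {RL : Matrix m₁ n₁ α} {QR : Matrix m₂ m₂ α}
    {RR : Matrix m₂ n₂ α} (hQL : QL * QLᴴ = 1) (hL : fromRows A₁₁ A₂₁ = QL * fromRows RL 0)
    (hR : (QLᴴ * fromRows A₁₂ A₂₂).toRows₂ = QR * RR) :
    fromBlocks A₁₁ A₁₂ A₂₁ A₂₂ =
      QL * fromBlocks 1 0 0 QR * fromBlocks RL (QLᴴ * fromRows A₁₂ A₂₂).toRows₁ 0 RR := by
  set B := QLᴴ * fromRows A₁₂ A₂₂ with hB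
  calc fromBlocks A₁₁ A₁₂ A₂₁ A₂₂ = fromCols (fromRows A₁₁ A₂₁) (fromRows A₁₂ A₂₂) :=
        (fromCols_fromRows_eq_fromBlocks _ _ _ _).symm
    _ = fromCols (QL * fromRows RL 0) (QL * B) := by
        rw [hL, hB, ← Matrix.mul_assoc, hQL, Matrix.one_mul]
    _ = QL * fromCols (fromRows RL 0) B := (mul_fromCols _ _ _).symm
    _ = QL * fromBlocks RL B.toRows₁ 0 B.toRows₂ := by
        rw [← fromCols_fromRows_eq_fromBlocks, fromRows_toRows]
    _ = QL * fromBlocks 1 0 0 QR * fromBlocks RL B.toRows₁ 0 RR := by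
        rw [hR, Matrix.mul_assoc, fromBlocks_multiply]
        simp

end Matrix

theorem stmt5_general (n₁ n₂ m₂ : ℕ)
    (A₁₁ : Matrix (Fin n₁) (Fin n₁) ℂ) (A₁₂ : Matrix (Fin n₁) (Fin n₂) ℂ)
    (A₂₁ : Matrix (Fin m₂) (Fin n₁) ℂ) (A₂₂ : Matrix (Fin m₂) (Fin n₂) ℂ)
    (QL : Matrix (Fin n₁ ⊕ Fin m₂) (Fin n₁ ⊕ Fin m₂) ℂ)
    (RL : Matrix (Fin n₁ ⊕ Fin m₂) (Fin n₁) ℂ)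
    (hQL : QLᴴ * QL = 1 ∧ QL * QLᴴ = 1)
    (hRL : ∀ i : Fin n₁ ⊕ Fin m₂, ∀ j : Fin n₁,
      (j : ℕ) < Sum.elim (fun a : Fin n₁ => (a : ℕ)) (fun a : Fin m₂ => n₁ + a) i →
      RL i j = 0)
    (hL : Matrix.fromRows A₁₁ A₂₁ = QL * RL)
    (B : Matrix (Fin n₁ ⊕ Fin m₂) (Fin n₂) ℂ)
    (hB : B = QLᴴ * Matrix.fromRows A₁₂ A₂₂)
    (B₁₂ : Matrix (Fin n₁) (Fin n₂) ℂ) (hB₁₂ : B₁₂ = Matrix.of fun i j => B (Sum.inl i) j)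
    (B₂₂ : Matrix (Fin m₂) (Fin n₂) ℂ) (hB₂₂ : B₂₂ = Matrix.of fun i j => B (Sum.inr i) j)
    (QR : Matrix (Fin m₂) (Fin m₂) ℂ) (RR : Matrix (Fin m₂) (Fin n₂) ℂ)
    (hQR : QRᴴ * QR = 1 ∧ QR * QRᴴ = 1)
    (hRR : ∀ i : Fin m₂, ∀ j : Fin n₂, (j : ℕ) < (i : ℕ) → RR i j = 0)
    (hR : B₂₂ = QR * RR)
    (RL' : Matrix (Fin n₁) (Fin n₁) ℂ) (hRL' : RL' = Matrix.of fun i j => RL (Sum.inl i) j)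
    (Q : Matrix (Fin n₁ ⊕ Fin m₂) (Fin n₁ ⊕ Fin m₂) ℂ)
    (hQ : Q = QL * Matrix.fromBlocks 1 0 0 QR)
    (R : Matrix (Fin n₁ ⊕ Fin m₂) (Fin n₁ ⊕ Fin n₂) ℂ)
    (hRdef : R = Matrix.fromBlocks RL' B₁₂ 0 RR) :
    (Qᴴ * Q = 1 ∧ Q * Qᴴ = 1) ∧
    (∀ i : Fin n₁ ⊕ Fin m₂, ∀ j : Fin n₁ ⊕ Fin n₂,
      Sum.elim (fun a : Fin n₁ => (a : ℕ)) (fun a : Fin n₂ => n₁ + a) j <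
        Sum.elim (fun a : Fin n₁ => (a : ℕ)) (fun a : Fin m₂ => n₁ + a) i →
      R i j = 0) ∧
    Matrix.fromBlocks A₁₁ A₁₂ A₂₁ A₂₂ = Q * R := by
  obtain rfl : RL' = RL.toRows₁ := hRL'
  obtain rfl : B₁₂ = B.toRows₁ := hB₁₂
  obtain rfl : B₂₂ = B.toRows₂ := hB₂₂
  subst hQ hRdef hB
  have hRL_top : fromRows A₁₁ A₂₁ = QL * fromRows RL.toRows₁ 0 := by
    rwa [fromRows_toRows₁_zero_of_upperTrapezoidal RL hRL]
  exact ⟨mul_mem (show QL ∈ unitary _ from hQL) (fromBlocks_zero_mem_unitary (one_mem _) hQR),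
    fromBlocks_apply_eq_zero_of_upperTrapezoidal _ (fun i j => hRL (.inl i) j) hRR,
    fromBlocks_eq_mul_of_panel_qr hQL.2 hRL_top hR⟩

theorem stmt5 (n₁ n₂ m₂ : ℕ) (hmn : n₂ ≤ m₂)
    (A₁₁ : Matrix (Fin n₁) (Fin n₁) ℂ) (A₁₂ : Matrix (Fin n₁) (Fin n₂) ℂ)
    (A₂₁ : Matrix (Fin m₂) (Fin n₁) ℂ) (A₂₂ : Matrix (Fin m₂) (Fin n₂) ℂ)
    (QL : Matrix (Fin n₁ ⊕ Fin m₂) (Fin n₁ ⊕ Fin m₂) ℂ)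
    (RL : Matrix (Fin n₁ ⊕ Fin m₂) (Fin n₁) ℂ)
    (hQL : QLᴴ * QL = 1 ∧ QL * QLᴴ = 1)
    (hRL : ∀ i : Fin n₁ ⊕ Fin m₂, ∀ j : Fin n₁,
      (j : ℕ) < Sum.elim (fun a : Fin n₁ => (a : ℕ)) (fun a : Fin m₂ => n₁ + a) i →
      RL i j = 0)
    (hL : Matrix.fromRows A₁₁ A₂₁ = QL * RL)
    (B : Matrix (Fin n₁ ⊕ Fin m₂) (Fin n₂) ℂ)
    (hB : B = QLᴴ * Matrix.fromRows A₁₂ A₂₂)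
    (B₁₂ : Matrix (Fin n₁) (Fin n₂) ℂ) (hB₁₂ : B₁₂ = Matrix.of fun i j => B (Sum.inl i) j)
    (B₂₂ : Matrix (Fin m₂) (Fin n₂) ℂ) (hB₂₂ : B₂₂ = Matrix.of fun i j => B (Sum.inr i) j)
    (QR : Matrix (Fin m₂) (Fin m₂) ℂ) (RR : Matrix (Fin m₂) (Fin n₂) ℂ)
    (hQR : QRᴴ * QR = 1 ∧ QR * QRᴴ = 1)
    (hRR : ∀ i : Fin m₂, ∀ j : Fin n₂, (j : ℕ) < (i : ℕ) → RR i j = 0)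
    (hR : B₂₂ = QR * RR)
    (RL' : Matrix (Fin n₁) (Fin n₁) ℂ) (hRL' : RL' = Matrix.of fun i j => RL (Sum.inl i) j)
    (Q : Matrix (Fin n₁ ⊕ Fin m₂) (Fin n₁ ⊕ Fin m₂) ℂ)
    (hQ : Q = QL * Matrix.fromBlocks 1 0 0 QR)
    (R : Matrix (Fin n₁ ⊕ Fin m₂) (Fin n₁ ⊕ Fin n₂) ℂ)
    (hRdef : R = Matrix.fromBlocks RL' B₁₂ 0 RR) :
    (Qᴴ * Q = 1 ∧ Q * Qᴴ = 1) ∧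
    (∀ i : Fin n₁ ⊕ Fin m₂, ∀ j : Fin n₁ ⊕ Fin n₂,
      Sum.elim (fun a : Fin n₁ => (a : ℕ)) (fun a : Fin n₂ => n₁ + a) j <
        Sum.elim (fun a : Fin n₁ => (a : ℕ)) (fun a : Fin m₂ => n₁ + a) i →
      R i j = 0) ∧
    Matrix.fromBlocks A₁₁ A₁₂ A₂₁ A₂₂ = Q * R :=
  stmt5_general n₁ n₂ m₂ A₁₁ A₁₂ A₂₁ A₂₂ QL RL hQL hRL hL B hB B₁₂ hB₁₂ B₂₂ hB₂₂ QR RR hQR hRR hR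
    RL' hRL' Q hQ R hRdef
end

section
/- For any complex n×n matrix X there exist a diagonal matrix S with all diagonal entries of modulus 1, a unit lower triangular matrix L, and an upper triangular matrix U with all diagonal entries nonzero, such that X + S = L U. -/
/-!
Gaussian elimination without pivoting, except that each pivot `x` is first shifted to `x + t`
with `t` a unimodular scalar chosen so that `x + t ≠ 0` (`t = 1` unless `x = -1`). Writing the
shifted matrix as `[[a, r], [c, B]]` with `a ≠ 0`, one has
`[[a, r], [c, B + S']] = [[1, 0], [c/a, L']] * [[a, r], [0, U']]` as soon as
`B - c r / a + S' = L' U'`, so the shifts collected along the elimination form `S`.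
-/

open Matrix

namespace Matrix

variable {R : Type*} {n : ℕ}

/-- The `(n+1) × (n+1)` matrix `[[a, r], [c, B]]`. -/
def bordered (a : R) (r c : Fin n → R) (B : Matrix (Fin n) (Fin n) R) :
    Matrix (Fin (n + 1)) (Fin (n + 1)) R :=
  of (Fin.cons (Fin.cons a r) fun i => Fin.cons (c i) (B i))

section Apply

variable (a : R) (r c : Fin n → R) (B : Matrix (Fin n) (Fin n) R)

@[simp] lemma bordered_zero_zero : bordered a r c B 0 0 = a := rfl

@[simp] lemma bordered_zero_succ (j : Fin n) : bordered a r c B 0 j.succ = r j := by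
  simp [bordered]

@[simp] lemma bordered_succ_zero (i : Fin n) : bordered a r c B i.succ 0 = c i := by
  simp [bordered]

@[simp] lemma bordered_succ_succ (i j : Fin n) : bordered a r c B i.succ j.succ = B i j := by
  simp [bordered]

end Apply

lemma eq_bordered (X : Matrix (Fin (n + 1)) (Fin (n + 1)) R) :
    X = bordered (X 0 0) (fun j => X 0 j.succ) (fun i => X i.succ 0)
      (X.submatrix Fin.succ Fin.succ) := by
  ext i j
  induction i using Fin.cases <;> induction j using Fin.cases <;> simp

lemma bordered_add_bordered [Add R] (a a' : R) (r r' c c' : Fin n → R)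
    (B B' : Matrix (Fin n) (Fin n) R) :
    bordered a r c B + bordered a' r' c' B' = bordered (a + a') (r + r') (c + c') (B + B') := by
  ext i j
  induction i using Fin.cases <;> induction j using Fin.cases <;> simp

lemma bordered_mul_bordered [CommSemiring R] (a : R) (l r : Fin n → R)
    (L U : Matrix (Fin n) (Fin n) R) :
    bordered 1 0 l L * bordered a r 0 U = bordered a r (a • l) (vecMulVec l r + L * U) := by
  ext i j
  induction i using Fin.cases <;> induction j using Fin.cases <;>
    simp [mul_apply, Fin.sum_univ_succ, vecMulVec_apply, mul_comm]

lemma IsDiag.bordered [Zero R] {a : R} {S : Matrix (Fin n) (Fin n) R} (hS : S.IsDiag) :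
    (bordered a 0 0 S).IsDiag := by
  intro i j hij
  induction i using Fin.cases <;> induction j using Fin.cases
  · exact absurd rfl hij
  · simp
  · simp
  · simpa using hS (by simpa using hij)

lemma IsLowerTriangular.bordered [Zero R] {a : R} {c : Fin n → R}
    {L : Matrix (Fin n) (Fin n) R} (hL : L.IsLowerTriangular) :
    (bordered a 0 c L).IsLowerTriangular := by
  intro i j hij
  rw [OrderDual.toDual_lt_toDual] at hij
  induction i using Fin.cases <;> induction j using Fin.cases
  · simp at hij
  · simp
  · simp at hij
  · simpa using hL (OrderDual.toDual_lt_toDual.mpr (by simpa using hij))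

lemma IsUpperTriangular.bordered [Zero R] {a : R} {r : Fin n → R}
    {U : Matrix (Fin n) (Fin n) R} (hU : U.IsUpperTriangular) :
    (bordered a r 0 U).IsUpperTriangular := by
  intro i j hij
  induction i using Fin.cases <;> induction j using Fin.cases
  · simp at hij
  · simp at hij
  · simp
  · simpa using hU (by simpa using hij)

lemma forall_bordered_apply_self (p : R → Prop) {a : R} {r c : Fin n → R}
    {B : Matrix (Fin n) (Fin n) R} (ha : p a) (hB : ∀ i, p (B i i)) :
    ∀ i, p (bordered a r c B i i) :=
  Fin.cases (by simpa using ha) (by simpa using hB)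

theorem exists_isDiag_add_eq_mul_of_forall_exists_add_ne_zero {K : Type*} [Field K]
    {T : Set K} (hT : ∀ x, ∃ t ∈ T, x + t ≠ 0) :
    ∀ {n : ℕ} (X : Matrix (Fin n) (Fin n) K), ∃ S L U : Matrix (Fin n) (Fin n) K,
      S.IsDiag ∧ (∀ i, S i i ∈ T) ∧ L.IsLowerTriangular ∧ (∀ i, L i i = 1) ∧
      U.IsUpperTriangular ∧ (∀ i, U i i ≠ 0) ∧ X + S = L * U
  | 0, X => ⟨0, 1, 1, isDiag_zero, finZeroElim, fun i => i.elim0, finZeroElim,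
      fun i => i.elim0, finZeroElim, Subsingleton.elim _ _⟩
  | n + 1, X => by
    obtain ⟨t, htT, hpivot⟩ := hT (X 0 0)
    set a := X 0 0 + t
    set r : Fin n → K := fun j => X 0 j.succ
    set c : Fin n → K := fun i => X i.succ 0
    set l : Fin n → K := a⁻¹ • c
    obtain ⟨S, L, U, hS, hST, hL, hL1, hU, hU0, hXS⟩ :=
      exists_isDiag_add_eq_mul_of_forall_exists_add_ne_zero hT
        (X.submatrix Fin.succ Fin.succ - vecMulVec l r)
    refine ⟨bordered t 0 0 S, bordered 1 0 l L, bordered a r 0 U, hS.bordered,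
      forall_bordered_apply_self (· ∈ T) htT hST, hL.bordered,
      forall_bordered_apply_self (· = 1) rfl hL1,
      hU.bordered, forall_bordered_apply_self (· ≠ 0) hpivot hU0, ?_⟩
    rw [bordered_mul_bordered, ← hXS, smul_inv_smul₀ hpivot]
    conv_lhs => rw [eq_bordered X, bordered_add_bordered, add_zero, add_zero]
    congr 1
    abel

end Matrix

lemma Complex.exists_norm_eq_one_add_ne_zero (x : ℂ) :
    ∃ t ∈ {z : ℂ | ‖z‖ = 1}, x + t ≠ 0 := by
  by_cases hx : x + 1 = 0
  · refine ⟨-1, by simp, ?_⟩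
    rw [eq_neg_of_add_eq_zero_left hx]
    norm_num
  · exact ⟨1, by simp, hx⟩

theorem stmt7 (n : ℕ) (X : Matrix (Fin n) (Fin n) ℂ) :
    ∃ S L U : Matrix (Fin n) (Fin n) ℂ,
      S.IsDiag ∧ (∀ i, ‖S i i‖ = 1) ∧
      (∀ i j : Fin n, (i : ℕ) < (j : ℕ) → L i j = 0) ∧ (∀ i, L i i = 1) ∧
      (∀ i j : Fin n, (j : ℕ) < (i : ℕ) → U i j = 0) ∧ (∀ i, U i i ≠ 0) ∧
      X + S = L * U := by
  obtain ⟨S, L, U, hS, hST, hL, hL1, hU, hU0, hXS⟩ :=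
    exists_isDiag_add_eq_mul_of_forall_exists_add_ne_zero
      Complex.exists_norm_eq_one_add_ne_zero X
  exact ⟨S, L, U, hS, hST, fun _ _ h => hL h, hL1, fun _ _ h => hU h, hU0, hXS⟩
end

section
/- Let P ≥ 1. For nonnegative integers a_1,…,a_P, if each a_q is split into P parts of sizes ⌈a_q/P⌉ or ⌊a_q/P⌋ assigned cyclically to P bins with staggered starting offsets q, q+1, …, then every bin s receives at most (Σ_q a_q)/P + (P−1)/2 + 1 words. -/
theorem stmt15 (P : ℕ) (hP : 1 ≤ P) (a : Fin P → ℕ) (s : Fin P) :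
    ((∑ q : Fin P, (a q / P + if ((s - q : Fin P) : ℕ) < a q % P then 1 else 0) : ℕ) : ℝ)
      ≤ (∑ q : Fin P, (a q : ℝ)) / P + ((P : ℝ) - 1) / 2 + 1 := by
  haveI : NeZero P := ⟨by omega⟩
  have hPpos : (0:ℝ) < P := by exact_mod_cast Nat.pos_of_ne_zero (by omega)
  have key : ∀ q : Fin P,
      ((a q / P : ℕ) : ℝ) + (if ((s - q : Fin P) : ℕ) < a q % P then (1:ℝ) else 0)
        ≤ (a q : ℝ)/P + ((P:ℝ) - 1 - ((s - q : Fin P) : ℕ))/P := by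
    intro q
    set c : ℕ := ((s - q : Fin P) : ℕ) with hc
    have hcP : c < P := (s - q).is_lt
    have hmod : a q % P < P := Nat.mod_lt _ (by omega)
    have hdm : P * (a q / P) + a q % P = a q := Nat.div_add_mod _ _
    have hdiv : ((a q / P : ℕ) : ℝ) = ((a q : ℝ) - (a q % P : ℕ))/P := by
      field_simp
      have : ((P * (a q / P) + a q % P : ℕ) : ℝ) = (a q : ℝ) := by rw [hdm]
      push_cast at this
      linarith
    rw [hdiv]
    split_ifs with h
    · have h1 : (c:ℝ) + 1 ≤ ((a q % P : ℕ) : ℝ) := by exact_mod_cast h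
      have h2 : ((a q:ℝ) - ((a q % P : ℕ):ℝ))/P + 1 = (((a q:ℝ) - ((a q % P : ℕ):ℝ)) + P)/P := by
        field_simp
      rw [h2, ← add_div, div_le_div_iff₀ hPpos hPpos]
      nlinarith
    · have h0 : ((a q % P : ℕ) : ℝ) ≥ 0 := by positivity
      have hcr : (c:ℝ) ≤ (P:ℝ) - 1 := by
        have : (c:ℝ) + 1 ≤ P := by exact_mod_cast hcP
        linarith
      rw [add_zero, ← add_div, div_le_div_iff₀ hPpos hPpos]
      nlinarith
  have hsum : ∑ q : Fin P, (((s - q : Fin P) : ℕ) : ℝ) = (P:ℝ)*((P:ℝ)-1)/2 := by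
    have hre : ∑ q : Fin P, (((s - q : Fin P) : ℕ) : ℝ) = ∑ x : Fin P, ((x : ℕ) : ℝ) :=
      Fintype.sum_equiv (Equiv.subLeft s) _ _ (fun x => rfl)
    rw [hre, Fin.sum_univ_eq_sum_range]
    have h2 : (∑ i ∈ Finset.range P, i) * 2 = P * (P - 1) := Finset.sum_range_id_mul_two P
    have h2' : ((∑ i ∈ Finset.range P, i : ℕ) : ℝ) * 2 = (P:ℝ) * ((P:ℝ) - 1) := by
      have : ((P * (P-1) : ℕ) : ℝ) = (P:ℝ) * ((P:ℝ) - 1) := by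
        push_cast [Nat.cast_sub hP]; ring
      rw [← this, ← h2]; push_cast; ring
    push_cast at h2' ⊢
    linarith
  calc ((∑ q : Fin P, (a q / P + if ((s - q : Fin P) : ℕ) < a q % P then 1 else 0) : ℕ) : ℝ)
      = ∑ q : Fin P, (((a q / P : ℕ) : ℝ) + (if ((s - q : Fin P) : ℕ) < a q % P then (1:ℝ) else 0)) := by
        push_cast; ring_nf
    _ ≤ ∑ q : Fin P, ((a q : ℝ)/P + ((P:ℝ) - 1 - ((s - q : Fin P) : ℕ))/P) :=
        Finset.sum_le_sum (fun q _ => key q)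
    _ = (∑ q : Fin P, (a q : ℝ))/P + (∑ q : Fin P, (((P:ℝ) - 1) - (((s - q : Fin P) : ℕ) : ℝ)))/P := by
        rw [Finset.sum_add_distrib, Finset.sum_div, Finset.sum_div]
    _ ≤ (∑ q : Fin P, (a q : ℝ))/P + ((P:ℝ)-1)/2 + 1 := by
        rw [Finset.sum_sub_distrib, hsum, Finset.sum_const, Finset.card_univ, Fintype.card_fin]
        rw [nsmul_eq_mul]
        have : ((P:ℝ) * ((P:ℝ)-1) - (P:ℝ)*((P:ℝ)-1)/2) / P = ((P:ℝ)-1)/2 := by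
          field_simp; ring
        rw [this]; linarith
end
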